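/- arXiv:2401.11183 — 2 statements merged into one kernel-verified Lean document; each statement's English description precedes it below -/
import Mathlib

section
/- Fix ρ ∈ [0,1). Under Assumptions 1, 2 and 3 (including properties (v) and (vi)), and assuming (0,𝟎) ∈ F̄_ρ, the set F̄_ρ is robustly positive invariant for the difference inclusion z⁺ ∈ H_ρ(z,w) with w ∈ W (i.e. the stability filter is recursively feasible), and the origin (x,ũ) = 0 is robustly asymptotically stable for z⁺ ∈ H_ρ(z,w) with region of attraction F̄_ρ: there exist β of class KL and γ of class K such that every solution ψ from any z ∈ F̄_ρ under any disturbance sequence 𝐰 with values in W satisfies ‖ψ(k)‖ ≤ β(‖z‖, k) + γ(‖𝐰‖) for all k ∈ ℕ. -/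
open scoped Classical Pointwise
open Filter

noncomputable section

/-- `Vec n` is `ℝ^n` with the Euclidean norm. -/
abbrev Vec (n : ℕ) : Type := EuclideanSpace ℝ (Fin n)

/-- A function `σ : [0,∞) → [0,∞)` is of class K if it is continuous,
strictly increasing and `σ 0 = 0`. -/
def ClassK (σ : ℝ → ℝ) : Prop :=
  ContinuousOn σ (Set.Ici 0) ∧ StrictMonoOn σ (Set.Ici 0) ∧ σ 0 = 0

/-- Class K∞: class K and unbounded. -/
def ClassKInf (σ : ℝ → ℝ) : Prop :=
  ClassK σ ∧ Tendsto σ atTop atTop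

/-- Class KL function `β : [0,∞) × ℕ → [0,∞)`. -/
def ClassKL (β : ℝ → ℕ → ℝ) : Prop :=
  (∀ k, ClassK fun s => β s k) ∧
    ∀ s, 0 ≤ s → Antitone (fun k => β s k) ∧ Tendsto (fun k => β s k) atTop (nhds 0)

section Framework

variable {nx nu nw N : ℕ}

/-- Nominal `k`-step trajectory `φ(x,𝐮;k)` of `x⁺ = f(x,u,0)` (horizon `N+1`). -/
def phi (f : Vec nx → Vec nu → Vec nw → Vec nx) (x : Vec nx)
    (u : Fin (N + 1) → Vec nu) : ℕ → Vec nx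
  | 0 => x
  | k + 1 => f (phi f x u k) (if h : k < N + 1 then u ⟨k, h⟩ else 0) 0

/-- The cost `V(x,𝐮) = Σ l(φ(x,𝐮;k),u_k) + m(φ(x,𝐮;N))`. -/
def Vcost (f : Vec nx → Vec nu → Vec nw → Vec nx) (l : Vec nx → Vec nu → ℝ)
    (m : Vec nx → ℝ) (x : Vec nx) (u : Fin (N + 1) → Vec nu) : ℝ :=
  (∑ k : Fin (N + 1), l (phi f x u (k : ℕ)) (u k)) + m (phi f x u (N + 1))

/-- Feasibility of a state–input-sequence pair. -/
def Feasible (f : Vec nx → Vec nu → Vec nw → Vec nx)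
    (Ω : Fin (N + 1) → Set (Vec nx × Vec nu)) (Zf : Set (Vec nx))
    (x : Vec nx) (u : Fin (N + 1) → Vec nu) : Prop :=
  (∀ k : Fin (N + 1), (phi f x u (k : ℕ), u k) ∈ Ω k) ∧ phi f x u (N + 1) ∈ Zf

/-- The set `𝒰_ρ(x,ũ)` of feasible input sequences of the stability filter. -/
def Useq (f : Vec nx → Vec nu → Vec nw → Vec nx) (l : Vec nx → Vec nu → ℝ)
    (m : Vec nx → ℝ) (Ω : Fin (N + 1) → Set (Vec nx × Vec nu)) (Zf : Set (Vec nx))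
    (ξc : Vec nx → (Fin (N + 1) → Vec nu) → Vec nw → Fin (N + 1) → Vec nu)
    (ρ : ℝ) (x : Vec nx) (ut : Fin (N + 1) → Vec nu) : Set (Fin (N + 1) → Vec nu) :=
  {v | Feasible f Ω Zf x v ∧
    Vcost f l m (f x (v 0) 0) (ξc (f x (v 0) 0) v 0) ≤
      Vcost f l m x ut - (1 - ρ) * l x (ut 0)}

/-- The admissible set `F̄_ρ` of state–warmstart pairs. -/
def Fbar (f : Vec nx → Vec nu → Vec nw → Vec nx) (l : Vec nx → Vec nu → ℝ)
    (m : Vec nx → ℝ) (Ω : Fin (N + 1) → Set (Vec nx × Vec nu)) (Zf : Set (Vec nx))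
    (ξc : Vec nx → (Fin (N + 1) → Vec nu) → Vec nw → Fin (N + 1) → Vec nu)
    (ρ : ℝ) : Set (Vec nx × (Fin (N + 1) → Vec nu)) :=
  {p | Feasible f Ω Zf p.1 p.2 ∧ (Useq f l m Ω Zf ξc ρ p.1 p.2).Nonempty}

/-- The warmstart generating function `ξ`, switching between `ξ_f` and `ξ_c`. -/
def warmstart (f : Vec nx → Vec nu → Vec nw → Vec nx) (l : Vec nx → Vec nu → ℝ)
    (m : Vec nx → ℝ) (Zf : Set (Vec nx))
    (ξc : Vec nx → (Fin (N + 1) → Vec nu) → Vec nw → Fin (N + 1) → Vec nu)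
    (ξf : Vec nx → (Fin (N + 1) → Vec nu) → Fin (N + 1) → Vec nu)
    (x : Vec nx) (u : Fin (N + 1) → Vec nu) (w : Vec nw) : Fin (N + 1) → Vec nu :=
  if x ∈ Zf ∧ Vcost f l m x (ξf x u) ≤ Vcost f l m x (ξc x u w) then ξf x u
  else ξc x u w

/-- The closed-loop difference inclusion map `H_ρ(z,w)`. -/
def Hmap (f : Vec nx → Vec nu → Vec nw → Vec nx) (l : Vec nx → Vec nu → ℝ)
    (m : Vec nx → ℝ) (Ω : Fin (N + 1) → Set (Vec nx × Vec nu)) (Zf : Set (Vec nx))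
    (ξc : Vec nx → (Fin (N + 1) → Vec nu) → Vec nw → Fin (N + 1) → Vec nu)
    (ξf : Vec nx → (Fin (N + 1) → Vec nu) → Fin (N + 1) → Vec nu)
    (ρ : ℝ) (z : Vec nx × (Fin (N + 1) → Vec nu)) (w : Vec nw) :
    Set (Vec nx × (Fin (N + 1) → Vec nu)) :=
  {zp | ∃ v ∈ Useq f l m Ω Zf ξc ρ z.1 z.2,
    zp = (f z.1 (v 0) w, warmstart f l m Zf ξc ξf (f z.1 (v 0) w) v w)}

end Framework


/-!
The stability filter only accepts input sequences whose nominal candidate lowers the cost `V` by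
`(1 - ρ) l`, so `V` is an ISS-Lyapunov function on the bounded set `F̄_ρ`. It lies between
`αl ‖z‖` and a class-K function of `‖z‖`, and along the closed loop
`V z⁺ ≤ V z - α (V z) + Δ ‖w‖`. Here `Δ` measures the effect of the disturbance on the candidate
cost, uniformly on the compact closure of `F̄_ρ`, and `α` is of class K∞ because near the origin
the state lies in `Z_f`, where `V ≤ m` is small. A discrete comparison argument bounds `V` along
trajectories by a sequence decaying uniformly on `F̄_ρ` plus the ultimate bound `α⁻¹ (2Δ) + Δ`;
inverting `αl` turns this into the KL and K estimates. Robust invariance holds because the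
warmstart is either the `ξ_c` candidate, admissible by Assumption 3 (vi) and (i), or the `ξ_f`
candidate, admissible by (iii).
-/

open Set Filter Topology Function

namespace ClassK

variable {σ τ : ℝ → ℝ}

lemma monotoneOn (hσ : ClassK σ) : MonotoneOn σ (Ici 0) := hσ.2.1.monotoneOn

lemma nonneg (hσ : ClassK σ) {t : ℝ} (ht : 0 ≤ t) : 0 ≤ σ t :=
  hσ.2.2 ▸ hσ.monotoneOn (mem_Ici.2 le_rfl) ht ht

lemma pos (hσ : ClassK σ) {t : ℝ} (ht : 0 < t) : 0 < σ t :=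
  hσ.2.2 ▸ hσ.2.1 (mem_Ici.2 le_rfl) (mem_Ici.2 ht.le) ht

lemma mapsTo (hσ : ClassK σ) : MapsTo σ (Ici 0) (Ici 0) := fun _ ht => hσ.nonneg ht

lemma tendsto_comp (hσ : ClassK σ) {ι : Type*} {l : Filter ι} {u : ι → ℝ} (hu0 : ∀ i, 0 ≤ u i)
    (hu : Tendsto u l (𝓝 0)) : Tendsto (fun i => σ (u i)) l (𝓝 0) :=
  hσ.2.2 ▸ (hσ.1 0 (mem_Ici.2 le_rfl)).tendsto.comp
    (tendsto_nhdsWithin_iff.2 ⟨hu, Eventually.of_forall hu0⟩)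

lemma comp (hσ : ClassK σ) (hτ : ClassK τ) : ClassK fun t => σ (τ t) :=
  ⟨hσ.1.comp hτ.1 hτ.mapsTo, hσ.2.1.comp hτ.2.1 hτ.mapsTo, by simp [hτ.2.2, hσ.2.2]⟩

lemma add (hσ : ClassK σ) (hτ : ClassK τ) : ClassK fun t => σ t + τ t :=
  ⟨hσ.1.add hτ.1, fun _ hs _ ht hst => add_lt_add (hσ.2.1 hs ht hst) (hτ.2.1 hs ht hst),
    by simp [hσ.2.2, hτ.2.2]⟩

lemma const_mul (hσ : ClassK σ) {c : ℝ} (hc : 0 < c) : ClassK fun t => c * σ t :=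
  ⟨continuousOn_const.mul hσ.1, fun _ hs _ ht hst => mul_lt_mul_of_pos_left (hσ.2.1 hs ht hst) hc,
    by simp [hσ.2.2]⟩

lemma add_id (hσ : ClassK σ) : ClassKInf fun t => σ t + t := by
  refine ⟨hσ.add ⟨continuousOn_id, strictMonoOn_id, rfl⟩, tendsto_atTop_mono' _ ?_ tendsto_id⟩
  filter_upwards [eventually_ge_atTop 0] with t ht
  exact le_add_of_nonneg_left (hσ.nonneg ht)

end ClassK

def kInv (α : ℝ → ℝ) : ℝ → ℝ := invFunOn α (Ici 0)

namespace ClassKInf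

variable {α β : ℝ → ℝ}

lemma surjOn (hα : ClassKInf α) : SurjOn α (Ici 0) (Ici 0) := by
  intro t ht
  obtain ⟨b, hbt, hb⟩ := ((hα.2.eventually_ge_atTop t).and (eventually_ge_atTop 0)).exists
  obtain ⟨s, hs, rfl⟩ := intermediate_value_Icc hb (hα.1.1.mono Icc_subset_Ici_self)
    ⟨hα.1.2.2.symm ▸ ht, hbt⟩
  exact ⟨s, hs.1, rfl⟩

lemma apply_kInv (hα : ClassKInf α) {t : ℝ} (ht : 0 ≤ t) : α (kInv α t) = t :=
  invFunOn_eq (hα.surjOn ht)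

lemma kInv_nonneg (hα : ClassKInf α) {t : ℝ} (ht : 0 ≤ t) : 0 ≤ kInv α t :=
  invFunOn_mem (s := Ici 0) (hα.surjOn ht)

lemma le_kInv_iff (hα : ClassKInf α) {s t : ℝ} (hs : 0 ≤ s) (ht : 0 ≤ t) :
    s ≤ kInv α t ↔ α s ≤ t := by
  conv_rhs => rw [← hα.apply_kInv ht]
  exact (hα.1.2.1.le_iff_le hs (hα.kInv_nonneg ht)).symm

lemma kInv_le_iff (hα : ClassKInf α) {s t : ℝ} (hs : 0 ≤ s) (ht : 0 ≤ t) :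
    kInv α t ≤ s ↔ t ≤ α s := by
  conv_rhs => rw [← hα.apply_kInv ht]
  exact (hα.1.2.1.le_iff_le (hα.kInv_nonneg ht) hs).symm

lemma kInv_apply (hα : ClassKInf α) {s : ℝ} (hs : 0 ≤ s) : kInv α (α s) = s :=
  hα.1.2.1.injOn (hα.kInv_nonneg (hα.1.nonneg hs)) hs (hα.apply_kInv (hα.1.nonneg hs))

lemma monotoneOn_kInv (hα : ClassKInf α) : MonotoneOn (kInv α) (Ici 0) := fun _ hs t ht hst =>
  (hα.le_kInv_iff (hα.kInv_nonneg hs) ht).2 (by rwa [hα.apply_kInv hs])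

lemma continuousOn_kInv (hα : ClassKInf α) : ContinuousOn (kInv α) (Ici 0) := by
  -- extend `kInv α` by the identity on `(-∞, 0]` to a monotone surjection of `ℝ`
  have hmono : Monotone fun t => kInv α (max t 0) + min t 0 := fun s t hst =>
    add_le_add (hα.monotoneOn_kInv (le_max_right s 0) (le_max_right t 0) (max_le_max_right 0 hst))
      (min_le_min_right 0 hst)
  have hsurj : Surjective fun t => kInv α (max t 0) + min t 0 := by
    intro y
    rcases le_or_gt 0 y with hy | hy
    · refine ⟨α y, ?_⟩
      simp [max_eq_left (hα.1.nonneg hy), min_eq_right (hα.1.nonneg hy), hα.kInv_apply hy]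
    · refine ⟨y, ?_⟩
      have h0 : kInv α 0 = 0 := by simpa [hα.1.2.2] using hα.kInv_apply le_rfl
      simp [max_eq_right hy.le, min_eq_left hy.le, h0]
  refine (hmono.continuous_of_surjective hsurj).continuousOn.congr fun t (ht : 0 ≤ t) => ?_
  simp [max_eq_left ht, min_eq_right ht]

lemma kInv_classKInf (hα : ClassKInf α) : ClassKInf (kInv α) := by
  refine ⟨⟨hα.continuousOn_kInv, fun s hs t ht hst => ?_, ?_⟩, tendsto_atTop.2 fun b => ?_⟩
  · exact lt_of_not_ge fun h => hst.not_ge <| (hα.kInv_le_iff (hα.kInv_nonneg hs) ht).1 h |>.trans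
      (hα.apply_kInv hs).le
  · simpa [hα.1.2.2] using hα.kInv_apply le_rfl
  · filter_upwards [eventually_ge_atTop (α (max b 0))] with t ht
    have h0 : 0 ≤ α (max b 0) := hα.1.nonneg (le_max_right b 0)
    exact (le_max_left b 0).trans ((hα.le_kInv_iff (le_max_right b 0) (h0.trans ht)).2 ht)

lemma comp (hα : ClassKInf α) (hβ : ClassKInf β) : ClassKInf fun t => α (β t) :=
  ⟨hα.1.comp hβ.1, hα.2.comp hβ.2⟩

lemma const_mul (hα : ClassKInf α) {c : ℝ} (hc : 0 < c) : ClassKInf fun t => c * α t :=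
  ⟨hα.1.const_mul hc, hα.2.const_mul_atTop hc⟩

end ClassKInf

open MeasureTheory in
lemma continuousAt_integral_comp_mul {g : ℝ → ℝ} (hg : Monotone g) (hcont : ContinuousAt g 0)
    {r : ℝ} (hr : 0 ≤ r) : ContinuousAt (fun x => ∫ t in (1 : ℝ)..2, g (x * t)) r := by
  set B := 2 * (|r| + 1)
  refine intervalIntegral.continuousAt_of_dominated_interval (bound := fun _ => |g B| + |g (-B)|)
    (Eventually.of_forall fun x =>
      (hg.measurable.comp (measurable_const_mul x)).aestronglyMeasurable)
    ?_ intervalIntegrable_const ?_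
  · filter_upwards [Metric.ball_mem_nhds r one_pos] with x hx
    refine Eventually.of_forall fun t ht => ?_
    rw [uIoc_of_le (by norm_num : (1 : ℝ) ≤ 2)] at ht
    have hxt : |x * t| ≤ B := by
      rw [abs_mul, abs_of_pos (by linarith [ht.1] : 0 < t)]
      have : |x| ≤ |r| + 1 := by
        have := abs_sub_abs_le_abs_sub x r
        rw [Metric.mem_ball, Real.dist_eq] at hx
        linarith
      nlinarith [abs_nonneg x, ht.2]
    obtain ⟨hlo, hhi⟩ := abs_le.1 hxt
    rw [Real.norm_eq_abs, abs_le]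
    constructor <;> linarith [hg hlo, hg hhi, le_abs_self (g B), neg_abs_le (g (-B)),
      abs_nonneg (g B), abs_nonneg (g (-B)), neg_abs_le (g B), le_abs_self (g (-B))]
  · rcases hr.eq_or_lt with rfl | hr
    · exact Eventually.of_forall fun t _ =>
        ContinuousAt.comp (g := g) (by simpa using hcont) (continuous_mul_const t).continuousAt
    · -- `g` is continuous off a countable set, whose preimage under `t ↦ r * t` is null
      have hnull : volume ((fun t => r * t) ⁻¹' {x | ¬ContinuousAt g x}) = 0 :=
        (hg.countable_not_continuousAt.preimage (mul_right_injective₀ hr.ne')).measure_zero _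
      filter_upwards [measure_eq_zero_iff_ae_notMem.1 hnull] with t ht _
      exact ContinuousAt.comp (g := g) (not_not.1 ht) (continuous_mul_const t).continuousAt

open MeasureTheory in
theorem exists_classK_ge {g : ℝ → ℝ} (hg : Monotone g) (hg0 : g 0 = 0) (hcont : ContinuousAt g 0) :
    ∃ γ, ClassK γ ∧ ∀ r, 0 ≤ r → g r ≤ γ r := by
  -- averaging over `[r, 2r]` makes the majorant continuous; adding `r` makes it strictly increasing
  set G : ℝ → ℝ := fun r => ∫ t in (1 : ℝ)..2, g (r * t)
  have hint : ∀ r, 0 ≤ r → IntervalIntegrable (fun t => g (r * t)) volume 1 2 := fun r hr =>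
    MonotoneOn.intervalIntegrable fun s _ t _ hst => hg (mul_le_mul_of_nonneg_left hst hr)
  have hle : ∀ r, 0 ≤ r → g r ≤ G r := fun r hr => by
    have := intervalIntegral.integral_mono_on (by norm_num) intervalIntegrable_const (hint r hr)
      fun t ht => hg (le_mul_of_one_le_right hr ht.1)
    norm_num at this
    exact this
  have hmono : MonotoneOn G (Ici 0) := fun r hr s hs hrs =>
    intervalIntegral.integral_mono_on (by norm_num) (hint r hr) (hint s hs) fun t ht =>
      hg (mul_le_mul_of_nonneg_right hrs (by linarith [ht.1]))
  refine ⟨fun r => r + G r, ⟨fun r hr => (continuousAt_id.add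
    (continuousAt_integral_comp_mul hg hcont hr)).continuousWithinAt,
    fun r hr s hs hrs => add_lt_add_of_lt_of_le hrs (hmono hr hs hrs.le), by simp [G, hg0]⟩,
    fun r hr => le_add_of_nonneg_of_le hr (hle r hr)⟩

theorem exists_classK_le {X : Type*} {F size : X → ℝ} {S : Set X} (hbdd : BddAbove (F '' S))
    (hsmall : ∀ ε > 0, ∃ δ > 0, ∀ x ∈ S, size x ≤ δ → F x ≤ ε) :
    ∃ κ, ClassK κ ∧ ∀ x ∈ S, 0 ≤ size x → F x ≤ κ (size x) := by
  set g : ℝ → ℝ := fun t => sSup (insert 0 (F '' {x ∈ S | size x ≤ t}))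
  obtain ⟨B, hB⟩ := hbdd
  have hgbdd : ∀ t, BddAbove (insert 0 (F '' {x ∈ S | size x ≤ t})) := fun t =>
    ⟨max B 0, forall_mem_insert.2 ⟨le_max_right _ _, forall_mem_image.2 fun x hx =>
      (hB (mem_image_of_mem F hx.1)).trans (le_max_left _ _)⟩⟩
  have hg_nonneg : ∀ t, 0 ≤ g t := fun t => le_csSup (hgbdd t) (mem_insert 0 _)
  have hFg : ∀ x ∈ S, F x ≤ g (size x) := fun x hx =>
    le_csSup (hgbdd _) (mem_insert_of_mem _ (mem_image_of_mem F ⟨hx, le_rfl⟩))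
  have hgmono : Monotone g := fun s t hst =>
    csSup_le_csSup (hgbdd t) (insert_nonempty _ _)
      (insert_subset_insert (image_mono fun x hx => ⟨hx.1, hx.2.trans hst⟩))
  have hgsmall : ∀ ε > 0, ∃ δ > 0, g δ ≤ ε := fun ε hε => by
    obtain ⟨δ, hδ, hδε⟩ := hsmall ε hε
    exact ⟨δ, hδ, csSup_le (insert_nonempty _ _) (forall_mem_insert.2
      ⟨hε.le, forall_mem_image.2 fun x hx => hδε x hx.1 hx.2⟩)⟩
  have hg0 : g 0 = 0 := by
    refine le_antisymm (le_of_forall_pos_le_add fun ε hε => ?_) (hg_nonneg 0)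
    obtain ⟨δ, hδ, hδε⟩ := hgsmall ε hε
    linarith [hgmono hδ.le]
  have hgcont : ContinuousAt g 0 := by
    rw [ContinuousAt, hg0]
    refine tendsto_order.2 ⟨fun a ha => Eventually.of_forall fun t => ha.trans_le (hg_nonneg t),
      fun a ha => ?_⟩
    obtain ⟨δ, hδ, hδa⟩ := hgsmall (a / 2) (by linarith)
    filter_upwards [Iio_mem_nhds hδ] with t ht
    linarith [hgmono ht.le]
  obtain ⟨κ, hκ, hgκ⟩ := exists_classK_ge hgmono hg0 hgcont
  exact ⟨κ, hκ, fun x hx hsx => (hFg x hx).trans (hgκ _ hsx)⟩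

theorem exists_classK_sub_le {X E : Type*} [PseudoMetricSpace X] [ProperSpace X]
    [SeminormedAddCommGroup E] {G : X → E → ℝ} (hG : Continuous fun p : X × E => G p.1 p.2)
    {K : Set X} (hK : Bornology.IsBounded K) {W : Set E} (hW : IsCompact W) :
    ∃ Δ, ClassK Δ ∧ ∀ z ∈ K, ∀ w ∈ W, G z w - G z 0 ≤ Δ ‖w‖ := by
  have hF : Continuous fun p : X × E => G p.1 p.2 - G p.1 0 :=
    hG.sub (hG.comp (continuous_fst.prodMk continuous_const))
  have hC := hK.isCompact_closure
  obtain ⟨Δ, hΔ, hle⟩ := exists_classK_le (F := fun p : X × E => G p.1 p.2 - G p.1 0)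
    (size := fun p => ‖p.2‖) (S := K ×ˢ W)
    (((hC.prod hW).image hF).bddAbove.mono (image_mono (prod_mono subset_closure le_rfl)))
    (fun ε hε => by
      have hev : ∀ᶠ w in 𝓝 (0 : E), ∀ z ∈ closure K, G z w - G z 0 < ε :=
        hC.eventually_forall_of_forall_eventually fun z _ =>
          (hF.comp continuous_swap).continuousAt.eventually_lt continuousAt_const
            (by simpa using hε)
      obtain ⟨δ, hδ, hδε⟩ := Metric.eventually_nhds_iff.1 hev
      refine ⟨δ / 2, by positivity, fun p hp hpδ => (hδε ?_ p.1 (subset_closure hp.1)).le⟩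
      rw [dist_zero_right]
      linarith)
  exact ⟨Δ, hΔ, fun z hz w hw => hle (z, w) ⟨hz, hw⟩ (norm_nonneg w)⟩

/-- Bounds `v - α v / 2` for all `v ∈ [0, c]` when `α` is monotone; it replaces
`v ↦ v - α v / 2`, which need not be monotone, in the comparison argument. -/
def decayStep (α : ℝ → ℝ) (c : ℝ) : ℝ := max (c / 2) (c - α (c / 2) / 2)

lemma iterate_decayStep_nonneg {α : ℝ → ℝ} {c : ℝ} (hc : 0 ≤ c) (k : ℕ) :
    0 ≤ (decayStep α)^[k] c := by
  induction k with
  | zero => exact hc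
  | succ k ih =>
    rw [iterate_succ_apply']
    exact le_max_of_le_left (by positivity)

namespace ClassK

variable {α : ℝ → ℝ}

lemma decayStep_le_self (hα : ClassK α) {c : ℝ} (hc : 0 ≤ c) : decayStep α c ≤ c :=
  max_le (by linarith) (by linarith [hα.nonneg (by positivity : 0 ≤ c / 2)])

lemma sub_half_le_decayStep (hα : ClassK α) {v c : ℝ} (hv : 0 ≤ v) (hvc : v ≤ c) :
    v - α v / 2 ≤ decayStep α c := by
  rcases le_or_gt v (c / 2) with h | h
  · exact le_max_of_le_left (by linarith [hα.nonneg hv])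
  · exact le_max_of_le_right (by linarith [hα.monotoneOn (mem_Ici.2 (by linarith)) hv h.le])

lemma decayStep_le_sub (hα : ClassK α) {ε c : ℝ} (hε : 0 < ε) (hc : ε ≤ c) :
    decayStep α c ≤ c - min (ε / 2) (α (ε / 2) / 2) := by
  have hαε := hα.monotoneOn (mem_Ici.2 (by linarith)) (mem_Ici.2 (by linarith))
    (by linarith : ε / 2 ≤ c / 2)
  exact max_le (by linarith [min_le_left (ε / 2) (α (ε / 2) / 2)])
    (by linarith [min_le_right (ε / 2) (α (ε / 2) / 2)])

lemma antitone_iterate_decayStep (hα : ClassK α) {c : ℝ} (hc : 0 ≤ c) :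
    Antitone fun k => (decayStep α)^[k] c := antitone_nat_of_succ_le fun k => by
  rw [iterate_succ_apply']
  exact hα.decayStep_le_self (iterate_decayStep_nonneg hc k)

lemma tendsto_iterate_decayStep (hα : ClassK α) {c : ℝ} (hc : 0 ≤ c) :
    Tendsto (fun k => (decayStep α)^[k] c) atTop (𝓝 0) := by
  refine tendsto_order.2 ⟨fun a ha => Eventually.of_forall fun k =>
    ha.trans_le (iterate_decayStep_nonneg hc k),
    fun ε hε => ?_⟩
  -- above level `ε` every step decreases the iterate by at least `δ`
  suffices ∃ n, (decayStep α)^[n] c < ε from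
    let ⟨n, hn⟩ := this
    eventually_atTop.2 ⟨n, fun k hk => (hα.antitone_iterate_decayStep hc hk).trans_lt hn⟩
  by_contra! hbig
  set δ := min (ε / 2) (α (ε / 2) / 2)
  have hδ : 0 < δ := lt_min (by linarith) (by linarith [hα.pos (half_pos hε)])
  have hlin : ∀ n : ℕ, (decayStep α)^[n] c ≤ c - n * δ := fun n => by
    induction n with
    | zero => simp
    | succ n ih =>
      rw [iterate_succ_apply']
      push_cast
      linarith [hα.decayStep_le_sub hε (hbig n)]
  obtain ⟨n, hn⟩ := exists_nat_gt (c / δ)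
  rw [div_lt_iff₀ hδ] at hn
  linarith [hlin n, hbig n]

end ClassK

lemma le_max_of_decrease {α : ℝ → ℝ} (hα : ClassKInf α) {v c : ℕ → ℝ} {d : ℝ} (hd : 0 ≤ d)
    (hv : ∀ k, 0 ≤ v k) (hstep : ∀ k, v (k + 1) ≤ v k - α (v k) + d)
    (hc : ∀ k, decayStep α (c k) ≤ c (k + 1)) (h0 : v 0 ≤ c 0) :
    ∀ k, v k ≤ max (c k) (kInv α (2 * d) + d) := by
  set ζ := kInv α (2 * d) + d
  have hζ : 0 ≤ ζ := add_nonneg (hα.kInv_nonneg (by linarith)) hd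
  intro k
  induction k with
  | zero => exact le_max_of_le_left h0
  | succ k ih =>
    by_cases hsmall : α (v k) ≤ 2 * d
    · have hvk : v k ≤ kInv α (2 * d) := (hα.le_kInv_iff (hv k) (by linarith)).2 hsmall
      exact le_max_of_le_right (by linarith [hstep k, hα.1.nonneg (hv k)])
    · have hhalf : v (k + 1) ≤ decayStep α (max (c k) ζ) :=
        (hstep k).trans (by linarith) |>.trans (hα.1.sub_half_le_decayStep (hv k) ih)
      rcases max_choice (c k) ζ with h | h <;> rw [h] at hhalf
      · exact le_max_of_le_left (hhalf.trans (hc k))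
      · exact le_max_of_le_right (hhalf.trans (hα.1.decayStep_le_self hζ))

lemma classKL_sqrt_mul_sqrt {a : ℝ → ℝ} {q : ℕ → ℝ} (ha : ClassK a) (hq0 : ∀ k, 0 ≤ q k)
    (hq : Antitone q) (hqt : Tendsto q atTop (𝓝 0)) :
    ClassKL fun s k => √(a s) * √(q k + 2⁻¹ ^ k) := by
  have hpos : ∀ k, 0 < √(q k + 2⁻¹ ^ k) := fun k => Real.sqrt_pos.2 (by positivity [hq0 k])
  refine ⟨fun k => ⟨(Real.continuous_sqrt.comp_continuousOn ha.1).mul continuousOn_const,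
    fun s hs t ht hst => mul_lt_mul_of_pos_right
      (Real.sqrt_lt_sqrt (ha.nonneg hs) (ha.2.1 hs ht hst)) (hpos k), by simp [ha.2.2]⟩,
    fun s _ => ⟨fun k l hkl => ?_, ?_⟩⟩
  · exact mul_le_mul_of_nonneg_left (Real.sqrt_le_sqrt (add_le_add (hq hkl)
      (pow_le_pow_of_le_one (by norm_num) (by norm_num) hkl))) (Real.sqrt_nonneg _)
  · simpa using ((hqt.add (tendsto_pow_atTop_nhds_zero_of_lt_one (by norm_num)
      (by norm_num : (2 : ℝ)⁻¹ < 1))).sqrt.const_mul (√(a s)))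

lemma le_sqrt_mul_sqrt_add {x a b e g : ℝ} (hx : 0 ≤ x) (hxa : x ≤ max a g) (hxb : x ≤ max b g)
    (he : 0 ≤ e) (hg : 0 ≤ g) : x ≤ √a * √(b + e) + g := by
  rcases le_or_gt x g with hxg | hgx
  · exact le_add_of_nonneg_of_le (by positivity) hxg
  have hxa' : x ≤ a := (le_max_iff.1 hxa).resolve_right hgx.not_ge
  have hxb' : x ≤ b := (le_max_iff.1 hxb).resolve_right hgx.not_ge
  refine le_add_of_le_of_nonneg ?_ hg
  rw [← Real.sqrt_mul (hx.trans hxa'), Real.le_sqrt hx (by nlinarith)]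
  nlinarith

lemma norm_le_iSup_norm {E : Type*} [SeminormedAddGroup E] {W : Set E} (hW : Bornology.IsBounded W)
    {w : ℕ → E} (hw : ∀ i, w i ∈ W) (i : ℕ) : ‖w i‖ ≤ ⨆ j, ‖w j‖ := by
  obtain ⟨C, hC⟩ := isBounded_iff_forall_norm_le.1 hW
  exact le_ciSup ⟨C, forall_mem_range.2 fun j => hC _ (hw j)⟩ i

theorem exists_iss_bound_of_lyapunov {X E : Type*} [SeminormedAddGroup X] [SeminormedAddGroup E]
    {K : Set X} {W : Set E} (hW : Bornology.IsBounded W) {V : X → ℝ} (hVK : BddAbove (V '' K))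
    {αl ν α Δ : ℝ → ℝ} (hαl : ClassKInf αl) (hν : ClassK ν) (hα : ClassKInf α) (hΔ : ClassK Δ)
    (hlow : ∀ z ∈ K, αl ‖z‖ ≤ V z) (hup : ∀ z ∈ K, V z ≤ ν ‖z‖) {T : X → E → Set X}
    (hT : ∀ z ∈ K, ∀ w ∈ W, ∀ z' ∈ T z w, z' ∈ K ∧ V z' ≤ V z - α (V z) + Δ ‖w‖) :
    ∃ β γ, ClassKL β ∧ ClassK γ ∧
      ∀ z ∈ K, ∀ wseq : ℕ → E, (∀ i, wseq i ∈ W) →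
        ∀ ψ : ℕ → X, ψ 0 = z → (∀ k, ψ (k + 1) ∈ T (ψ k) (wseq k)) →
          ∀ k, ‖ψ k‖ ≤ β ‖z‖ k + γ (⨆ i, ‖wseq i‖) := by
  obtain ⟨M, hM⟩ := hVK
  -- `Φ` bounds `V` along every trajectory from `K`, uniformly in the initial state
  set Φ : ℕ → ℝ := fun k => (decayStep α)^[k] (max M 0)
  have hΦ0 : ∀ k, 0 ≤ Φ k := iterate_decayStep_nonneg (le_max_right M 0)
  have hΦ : Antitone Φ := hα.1.antitone_iterate_decayStep (le_max_right M 0)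
  have hαl' := hαl.kInv_classKInf
  refine ⟨fun s k => √(kInv αl (ν s)) * √(kInv αl (Φ k) + 2⁻¹ ^ k),
    fun r => kInv αl (kInv α (2 * Δ r) + Δ r),
    classKL_sqrt_mul_sqrt (hαl'.1.comp hν) (fun k => hαl.kInv_nonneg (hΦ0 k))
      (fun k l hkl => hαl.monotoneOn_kInv (hΦ0 l) (hΦ0 k) (hΦ hkl))
      (by simpa [hαl'.1.2.2] using
        hαl'.1.tendsto_comp hΦ0 (hα.1.tendsto_iterate_decayStep (le_max_right M 0))),
    hαl'.1.comp ((hα.kInv_classKInf.1.comp (hΔ.const_mul two_pos)).add hΔ), ?_⟩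
  intro z hz wseq hw ψ hψ0 hψ k
  set r := ⨆ i, ‖wseq i‖
  have hwr : ∀ i, ‖wseq i‖ ≤ r := norm_le_iSup_norm hW hw
  have hψK : ∀ k, ψ k ∈ K := fun k => by
    induction k with
    | zero => exact hψ0 ▸ hz
    | succ k ih => exact (hT _ ih _ (hw k) _ (hψ k)).1
  have hv : ∀ k, 0 ≤ V (ψ k) := fun k =>
    (hαl.1.nonneg (norm_nonneg _)).trans (hlow _ (hψK k))
  have hd : 0 ≤ Δ r := hΔ.nonneg ((norm_nonneg _).trans (hwr 0))
  have hstep : ∀ k, V (ψ (k + 1)) ≤ V (ψ k) - α (V (ψ k)) + Δ r := fun k =>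
    (hT _ (hψK k) _ (hw k) _ (hψ k)).2.trans (by
      linarith [hΔ.monotoneOn (norm_nonneg _) ((norm_nonneg _).trans (hwr k)) (hwr k)])
  have hstable := le_max_of_decrease hα hd hv hstep (c := fun _ => V (ψ 0))
    (fun _ => hα.1.decayStep_le_self (hv 0)) le_rfl k
  have hdecay := le_max_of_decrease hα hd hv hstep (c := Φ)
    (fun k => (iterate_succ_apply' _ _ _).ge)
    ((hM (mem_image_of_mem V (hψK 0))).trans (le_max_left M 0)) k
  have hnorm : ∀ t, V (ψ k) ≤ t → ‖ψ k‖ ≤ kInv αl t := fun t ht =>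
    (hαl.le_kInv_iff (norm_nonneg _) ((hv k).trans ht)).2 ((hlow _ (hψK k)).trans ht)
  have hζ : 0 ≤ kInv α (2 * Δ r) + Δ r := add_nonneg (hα.kInv_nonneg (by linarith)) hd
  have hmax : ∀ s, 0 ≤ s → kInv αl (max s (kInv α (2 * Δ r) + Δ r)) =
      max (kInv αl s) (kInv αl (kInv α (2 * Δ r) + Δ r)) := fun s hs =>
    hαl.monotoneOn_kInv.map_max hs hζ
  refine le_sqrt_mul_sqrt_add (norm_nonneg _) ?_ ((hnorm _ hdecay).trans_eq (hmax _ (hΦ0 k)))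
    (by positivity) (hαl.kInv_nonneg hζ)
  rw [← hmax _ (hν.nonneg (norm_nonneg z))]
  exact hnorm _ (hstable.trans (max_le_max_right _ (hψ0 ▸ hup z hz)))

theorem exists_classK_le_norm {X : Type*} [SeminormedAddGroup X] {F : X → ℝ} {S : Set X}
    (hbdd : BddAbove (F '' S)) (hF : ContinuousAt F 0) (hF0 : F 0 = 0) :
    ∃ κ, ClassK κ ∧ ∀ x ∈ S, F x ≤ κ ‖x‖ := by
  obtain ⟨κ, hκ, hle⟩ := exists_classK_le (size := norm) hbdd fun ε hε => by
    obtain ⟨δ, hδ, hδε⟩ := Metric.eventually_nhds_iff.1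
      (hF.eventually_lt continuousAt_const (hF0 ▸ hε))
    exact ⟨δ / 2, by positivity, fun x _ hx => (hδε (by rw [dist_zero_right]; linarith)).le⟩
  exact ⟨κ, hκ, fun x hx => hle x hx (norm_nonneg x)⟩

section StabilityFilter

variable {nx nu nw N : ℕ} {f : Vec nx → Vec nu → Vec nw → Vec nx} {l : Vec nx → Vec nu → ℝ}
  {m : Vec nx → ℝ} {Ω : Fin (N + 1) → Set (Vec nx × Vec nu)} {Zf : Set (Vec nx)}
  {ξc : Vec nx → (Fin (N + 1) → Vec nu) → Vec nw → Fin (N + 1) → Vec nu}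
  {ξf : Vec nx → (Fin (N + 1) → Vec nu) → Fin (N + 1) → Vec nu} {ρ : ℝ}

variable (f l m ξc) in
/-- `V(x⁺, ξ_c(x⁺, 𝐮, w))` with `x⁺ = f(x, u₀, w)`, for `z = (x, 𝐮)`. -/
def candidateCost (z : Vec nx × (Fin (N + 1) → Vec nu)) (w : Vec nw) : ℝ :=
  Vcost f l m (f z.1 (z.2 0) w) (ξc (f z.1 (z.2 0) w) z.2 w)

lemma continuous_phi (hfc : Continuous fun p : Vec nx × Vec nu × Vec nw => f p.1 p.2.1 p.2.2)
    (k : ℕ) : Continuous fun p : Vec nx × (Fin (N + 1) → Vec nu) => phi f p.1 p.2 k := by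
  induction k with
  | zero => exact continuous_fst
  | succ k ih =>
    by_cases hk : k < N + 1
    · simp only [phi, dif_pos hk]
      exact hfc.comp
        (ih.prodMk ((continuous_apply _).comp continuous_snd |>.prodMk continuous_const))
    · simp only [phi, dif_neg hk]
      exact hfc.comp (ih.prodMk (continuous_const (y := ((0 : Vec nu), (0 : Vec nw)))))

lemma continuous_Vcost (hfc : Continuous fun p : Vec nx × Vec nu × Vec nw => f p.1 p.2.1 p.2.2)
    (hlc : Continuous fun p : Vec nx × Vec nu => l p.1 p.2) (hmc : Continuous m) :
    Continuous fun p : Vec nx × (Fin (N + 1) → Vec nu) => Vcost f l m p.1 p.2 := by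
  unfold Vcost
  exact (continuous_finsetSum _ fun (k : Fin (N + 1)) _ => hlc.comp ((continuous_phi hfc k).prodMk
    ((continuous_apply (A := fun _ : Fin (N + 1) => Vec nu) k).comp continuous_snd))).add
    (hmc.comp (continuous_phi hfc _))

lemma continuous_candidateCost
    (hfc : Continuous fun p : Vec nx × Vec nu × Vec nw => f p.1 p.2.1 p.2.2)
    (hlc : Continuous fun p : Vec nx × Vec nu => l p.1 p.2) (hmc : Continuous m)
    (hξc : Continuous fun p : Vec nx × (Fin (N + 1) → Vec nu) × Vec nw => ξc p.1 p.2.1 p.2.2) :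
    Continuous fun p : (Vec nx × (Fin (N + 1) → Vec nu)) × Vec nw =>
      candidateCost f l m ξc p.1 p.2 := by
  have hx : Continuous fun p : (Vec nx × (Fin (N + 1) → Vec nu)) × Vec nw =>
      f p.1.1 (p.1.2 0) p.2 :=
    hfc.comp (continuous_fst.fst.prodMk
      (((continuous_apply (A := fun _ : Fin (N + 1) => Vec nu) 0).comp continuous_fst.snd).prodMk
        continuous_snd))
  exact (continuous_Vcost hfc hlc hmc).comp
    (hx.prodMk (hξc.comp (hx.prodMk (continuous_fst.snd.prodMk continuous_snd))))

lemma phi_zero (hf0 : f 0 0 0 = 0) (k : ℕ) : phi f 0 (0 : Fin (N + 1) → Vec nu) k = 0 := by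
  induction k with
  | zero => rfl
  | succ k ih => simp only [phi, ih, Pi.zero_apply, dite_eq_ite, ite_self, hf0]

lemma Vcost_zero (hf0 : f 0 0 0 = 0) (hl0 : l 0 0 = 0) (hm0 : m 0 = 0) :
    Vcost f l m 0 (0 : Fin (N + 1) → Vec nu) = 0 := by
  simp [Vcost, phi_zero hf0, hl0, hm0]

lemma exists_norm_le_norm_phi (x : Vec nx) (u : Fin (N + 1) → Vec nu) :
    ∃ k : Fin (N + 1), ‖(x, u)‖ ≤ ‖(phi f x u k, u k)‖ := by
  obtain ⟨k, -, hk⟩ := Finset.univ.exists_max_image (fun k : Fin (N + 1) => ‖(phi f x u k, u k)‖)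
    Finset.univ_nonempty
  refine ⟨k, max_le ((le_max_left _ (‖u 0‖)).trans (hk 0 (Finset.mem_univ _))) ?_⟩
  exact (pi_norm_le_iff_of_nonneg (norm_nonneg _)).2 fun i =>
    (le_max_right ‖phi f x u i‖ _).trans (hk i (Finset.mem_univ _))

lemma isBounded_Fbar (hΩ : ∀ k, IsCompact (Ω k)) :
    Bornology.IsBounded (Fbar f l m Ω Zf ξc ρ) := by
  obtain ⟨C, hC⟩ := isBounded_iff_forall_norm_le.1 (isCompact_iUnion hΩ).isBounded
  refine isBounded_iff_forall_norm_le.2 ⟨C, fun z hz => ?_⟩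
  obtain ⟨k, hk⟩ := exists_norm_le_norm_phi (f := f) z.1 z.2
  exact hk.trans (hC _ (mem_iUnion_of_mem k (hz.1.1 k)))

lemma le_Vcost_of_feasible {αl : ℝ → ℝ} (hαl : ClassK αl) (hlb : ∀ k, ∀ p ∈ Ω k, αl ‖p‖ ≤ l p.1 p.2)
    (hmnn : ∀ x, 0 ≤ m x) {x : Vec nx} {u : Fin (N + 1) → Vec nu} (hxu : Feasible f Ω Zf x u) :
    αl ‖(x, u)‖ ≤ Vcost f l m x u := by
  obtain ⟨k, hk⟩ := exists_norm_le_norm_phi (f := f) x u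
  have hl : ∀ i : Fin (N + 1), αl ‖(phi f x u i, u i)‖ ≤ l (phi f x u i) (u i) := fun i =>
    hlb i _ (hxu.1 i)
  calc αl ‖(x, u)‖ ≤ αl ‖(phi f x u k, u k)‖ := hαl.monotoneOn (norm_nonneg _) (norm_nonneg _) hk
    _ ≤ l (phi f x u k) (u k) := hl k
    _ ≤ ∑ i : Fin (N + 1), l (phi f x u i) (u i) := Finset.single_le_sum
        (fun i _ => (hαl.nonneg (norm_nonneg _)).trans (hl i)) (Finset.mem_univ k)
    _ ≤ Vcost f l m x u := le_add_of_nonneg_right (hmnn _)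

lemma Hmap_subset_Fbar {W : Set (Vec nw)}
    (hA3i : ∀ p ∈ Fbar f l m Ω Zf ξc ρ, ∀ w ∈ W,
      (f p.1 (p.2 0) w, ξc (f p.1 (p.2 0) w) p.2 w) ∈ Fbar f l m Ω Zf ξc ρ)
    (hA3iii : ∀ (xp : Vec nx) (v : Fin (N + 1) → Vec nu), ∀ w ∈ W,
      xp ∈ Zf → (xp, ξc xp v w) ∈ Fbar f l m Ω Zf ξc ρ → (xp, ξf xp v) ∈ Fbar f l m Ω Zf ξc ρ)
    (hA3vi : ∀ p ∈ Fbar f l m Ω Zf ξc ρ, ∀ v ∈ Useq f l m Ω Zf ξc ρ p.1 p.2,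
      (p.1, v) ∈ Fbar f l m Ω Zf ξc ρ) :
    ∀ z ∈ Fbar f l m Ω Zf ξc ρ, ∀ w ∈ W, Hmap f l m Ω Zf ξc ξf ρ z w ⊆ Fbar f l m Ω Zf ξc ρ := by
  rintro z hz w hw _ ⟨v, hv, rfl⟩
  have hc := hA3i (z.1, v) (hA3vi z hz v hv) w hw
  unfold warmstart
  split_ifs with h
  · exact hA3iii _ v w hw h.1 hc
  · exact hc

lemma exists_Vcost_le_of_mem_Hmap
    (hA3vi : ∀ p ∈ Fbar f l m Ω Zf ξc ρ, ∀ v ∈ Useq f l m Ω Zf ξc ρ p.1 p.2,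
      (p.1, v) ∈ Fbar f l m Ω Zf ξc ρ)
    {z zp : Vec nx × (Fin (N + 1) → Vec nu)} (hz : z ∈ Fbar f l m Ω Zf ξc ρ) {w : Vec nw}
    (hzp : zp ∈ Hmap f l m Ω Zf ξc ξf ρ z w) :
    ∃ v, (z.1, v) ∈ Fbar f l m Ω Zf ξc ρ ∧
      Vcost f l m zp.1 zp.2 ≤ Vcost f l m z.1 z.2 - (1 - ρ) * l z.1 (z.2 0) +
        (candidateCost f l m ξc (z.1, v) w - candidateCost f l m ξc (z.1, v) 0) := by
  obtain ⟨v, hv, rfl⟩ := hzp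
  have hws : Vcost f l m (f z.1 (v 0) w) (warmstart f l m Zf ξc ξf (f z.1 (v 0) w) v w) ≤
      candidateCost f l m ξc (z.1, v) w := by
    unfold warmstart
    split_ifs with h
    exacts [h.2, le_rfl]
  have hcand : candidateCost f l m ξc (z.1, v) 0 ≤ Vcost f l m z.1 z.2 - (1 - ρ) * l z.1 (z.2 0) :=
    hv.2
  exact ⟨v, hA3vi z hz v hv, by dsimp only; linarith⟩

lemma bddAbove_Vcost_image_Fbar
    (hfc : Continuous fun p : Vec nx × Vec nu × Vec nw => f p.1 p.2.1 p.2.2)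
    (hlc : Continuous fun p : Vec nx × Vec nu => l p.1 p.2) (hmc : Continuous m)
    (hΩ : ∀ k, IsCompact (Ω k)) :
    BddAbove ((fun z => Vcost f l m z.1 z.2) '' Fbar f l m Ω Zf ξc ρ) :=
  ((isBounded_Fbar hΩ).isCompact_closure.image (continuous_Vcost hfc hlc hmc)).bddAbove.mono
    (image_mono subset_closure)

lemma exists_classK_Vcost_le_norm_fst
    (hfc : Continuous fun p : Vec nx × Vec nu × Vec nw => f p.1 p.2.1 p.2.2)
    (hlc : Continuous fun p : Vec nx × Vec nu => l p.1 p.2) (hmc : Continuous m)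
    (hΩ : ∀ k, IsCompact (Ω k)) (hZf0 : (0 : Vec nx) ∈ interior Zf) (hm0 : m 0 = 0)
    (hA3v : ∀ p ∈ Fbar f l m Ω Zf ξc ρ, p.1 ∈ Zf → Vcost f l m p.1 p.2 ≤ m p.1) :
    ∃ μ, ClassK μ ∧ ∀ z ∈ Fbar f l m Ω Zf ξc ρ, Vcost f l m z.1 z.2 ≤ μ ‖z.1‖ := by
  obtain ⟨μ, hμ, hle⟩ := exists_classK_le (size := fun z => ‖z.1‖)
    (bddAbove_Vcost_image_Fbar hfc hlc hmc hΩ) fun ε hε => by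
      have hZf : ∀ᶠ y in 𝓝 (0 : Vec nx), y ∈ Zf := mem_interior_iff_mem_nhds.1 hZf0
      obtain ⟨δ, hδ, hδε⟩ := Metric.eventually_nhds_iff.1
        (hZf.and (hmc.continuousAt.eventually_lt continuousAt_const (by rwa [hm0])))
      refine ⟨δ / 2, by positivity, fun z hz hzδ => ?_⟩
      have hzZf := hδε (by rw [dist_zero_right]; linarith : dist z.1 0 < δ)
      exact (hA3v z hz hzZf.1).trans hzZf.2.le
  exact ⟨μ, hμ, fun z hz => hle z hz (norm_nonneg _)⟩

lemma exists_classKInf_le_stageCost (hρ : ρ < 1) {αl : ℝ → ℝ} (hαl : ClassKInf αl)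
    (hlb : ∀ k, ∀ p ∈ Ω k, αl ‖p‖ ≤ l p.1 p.2) (hmnn : ∀ x, 0 ≤ m x)
    (hfc : Continuous fun p : Vec nx × Vec nu × Vec nw => f p.1 p.2.1 p.2.2)
    (hlc : Continuous fun p : Vec nx × Vec nu => l p.1 p.2) (hmc : Continuous m)
    (hΩ : ∀ k, IsCompact (Ω k)) (hZf0 : (0 : Vec nx) ∈ interior Zf) (hm0 : m 0 = 0)
    (hA3v : ∀ p ∈ Fbar f l m Ω Zf ξc ρ, p.1 ∈ Zf → Vcost f l m p.1 p.2 ≤ m p.1) :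
    ∃ α, ClassKInf α ∧
      ∀ z ∈ Fbar f l m Ω Zf ξc ρ, α (Vcost f l m z.1 z.2) ≤ (1 - ρ) * l z.1 (z.2 0) := by
  obtain ⟨μ, hμ, hVμ⟩ := exists_classK_Vcost_le_norm_fst hfc hlc hmc hΩ hZf0 hm0 hA3v
  -- `V z ≤ μ ‖x‖ + ‖x‖` bounds `‖x‖` from below in terms of `V z`
  have hμ' := hμ.add_id
  refine ⟨fun t => (1 - ρ) * αl (kInv (fun s => μ s + s) t),
    (hαl.comp hμ'.kInv_classKInf).const_mul (by linarith), fun z hz => ?_⟩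
  have hV : 0 ≤ Vcost f l m z.1 z.2 :=
    (hαl.1.nonneg (norm_nonneg _)).trans (le_Vcost_of_feasible hαl.1 hlb hmnn hz.1)
  have hx : kInv (fun s => μ s + s) (Vcost f l m z.1 z.2) ≤ ‖z.1‖ :=
    (hμ'.kInv_le_iff (norm_nonneg _) hV).2 (by linarith [hVμ z hz, norm_nonneg z.1])
  have hl : αl ‖z.1‖ ≤ l z.1 (z.2 0) :=
    (hαl.1.monotoneOn (norm_nonneg _) (norm_nonneg _) (norm_fst_le (z.1, z.2 0))).trans
      (hlb 0 _ (hz.1.1 0))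
  exact mul_le_mul_of_nonneg_left
    ((hαl.1.monotoneOn (hμ'.kInv_nonneg hV) (norm_nonneg _) hx).trans hl) (by linarith)

end StabilityFilter

theorem stability_filter_robust_asymptotic_stability_general
    {nx nu nw N : ℕ}
    (f : Vec nx → Vec nu → Vec nw → Vec nx)
    (l : Vec nx → Vec nu → ℝ) (m : Vec nx → ℝ)
    (Ω : Fin (N + 1) → Set (Vec nx × Vec nu)) (Zf : Set (Vec nx))
    (W : Set (Vec nw))
    (ξc : Vec nx → (Fin (N + 1) → Vec nu) → Vec nw → Fin (N + 1) → Vec nu)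
    (ξf : Vec nx → (Fin (N + 1) → Vec nu) → Fin (N + 1) → Vec nu)
    (ρ : ℝ) (hρ : ρ ∈ Set.Ico (0 : ℝ) 1)
    -- setting
    (hW : IsCompact W)
    (hΩ : ∀ k, IsCompact (Ω k))
    (hZf0 : (0 : Vec nx) ∈ interior Zf)
    (hf0 : f 0 0 0 = 0)
    -- Assumption 1 (continuity)
    (hfc : Continuous fun p : Vec nx × Vec nu × Vec nw => f p.1 p.2.1 p.2.2)
    (hlc : Continuous fun p : Vec nx × Vec nu => l p.1 p.2)
    (hmc : Continuous m)
    (hl0 : l 0 0 = 0) (hm0 : m 0 = 0) (hmnn : ∀ x, 0 ≤ m x)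
    -- Assumption 2 (lower-bounded stage cost)
    (αl : ℝ → ℝ) (hαl : ClassKInf αl)
    (hlb : ∀ k, ∀ p ∈ Ω k, αl ‖p‖ ≤ l p.1 p.2)
    -- continuity of the candidate generating function
    (hξc : Continuous fun p : Vec nx × (Fin (N + 1) → Vec nu) × Vec nw =>
      ξc p.1 p.2.1 p.2.2)
    -- Assumption 3 (i): recursive feasibility of ξ_c
    (hA3i : ∀ p ∈ Fbar f l m Ω Zf ξc ρ, ∀ w ∈ W,
      (f p.1 (p.2 0) w, ξc (f p.1 (p.2 0) w) p.2 w) ∈ Fbar f l m Ω Zf ξc ρ)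
    -- Assumption 3 (iii): recursive feasibility of ξ_f
    (hA3iii : ∀ (xp : Vec nx) (v : Fin (N + 1) → Vec nu), ∀ w ∈ W,
      xp ∈ Zf → (xp, ξc xp v w) ∈ Fbar f l m Ω Zf ξc ρ →
        (xp, ξf xp v) ∈ Fbar f l m Ω Zf ξc ρ)
    -- property (v)
    (hA3v : ∀ p ∈ Fbar f l m Ω Zf ξc ρ, p.1 ∈ Zf → Vcost f l m p.1 p.2 ≤ m p.1)
    -- property (vi)
    (hA3vi : ∀ p ∈ Fbar f l m Ω Zf ξc ρ, ∀ v ∈ Useq f l m Ω Zf ξc ρ p.1 p.2,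
      (p.1, v) ∈ Fbar f l m Ω Zf ξc ρ)
    :
    (∀ z ∈ Fbar f l m Ω Zf ξc ρ, ∀ w ∈ W,
        Hmap f l m Ω Zf ξc ξf ρ z w ⊆ Fbar f l m Ω Zf ξc ρ) ∧
    ∃ β γ, ClassKL β ∧ ClassK γ ∧
      ∀ z ∈ Fbar f l m Ω Zf ξc ρ, ∀ wseq : ℕ → Vec nw, (∀ i, wseq i ∈ W) →
        ∀ ψ : ℕ → Vec nx × (Fin (N + 1) → Vec nu), ψ 0 = z →
          (∀ k, ψ (k + 1) ∈ Hmap f l m Ω Zf ξc ξf ρ (ψ k) (wseq k)) →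
          ∀ k, ‖ψ k‖ ≤ β ‖z‖ k + γ (⨆ i, ‖wseq i‖) := by
  have hRPI := Hmap_subset_Fbar (ξf := ξf) hA3i hA3iii hA3vi
  have hVbdd := bddAbove_Vcost_image_Fbar (Zf := Zf) (ξc := ξc) (ρ := ρ) hfc hlc hmc hΩ
  obtain ⟨Δ, hΔ, hΔle⟩ := exists_classK_sub_le (continuous_candidateCost hfc hlc hmc hξc)
    (isBounded_Fbar hΩ) hW
  obtain ⟨α, hα, hαle⟩ :=
    exists_classKInf_le_stageCost hρ.2 hαl hlb hmnn hfc hlc hmc hΩ hZf0 hm0 hA3v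
  obtain ⟨ν, hν, hνle⟩ := exists_classK_le_norm hVbdd (continuous_Vcost hfc hlc hmc).continuousAt
    (Vcost_zero hf0 hl0 hm0)
  refine ⟨hRPI, exists_iss_bound_of_lyapunov hW.isBounded hVbdd hαl hν hα hΔ
    (fun z hz => le_Vcost_of_feasible hαl.1 hlb hmnn hz.1) hνle
    fun z hz w hw zp hzp => ⟨hRPI z hz w hw hzp, ?_⟩⟩
  obtain ⟨v, hv, hle⟩ := exists_Vcost_le_of_mem_Hmap hA3vi hz hzp
  linarith [hαle z hz, hΔle _ hv w hw]

/-- Theorem 1 (robust asymptotic stability of the stability filter). -/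
theorem stability_filter_robust_asymptotic_stability
    {nx nu nw N : ℕ}
    (f : Vec nx → Vec nu → Vec nw → Vec nx)
    (l : Vec nx → Vec nu → ℝ) (m : Vec nx → ℝ)
    (Ω : Fin (N + 1) → Set (Vec nx × Vec nu)) (Zf : Set (Vec nx))
    (W : Set (Vec nw))
    (ξc : Vec nx → (Fin (N + 1) → Vec nu) → Vec nw → Fin (N + 1) → Vec nu)
    (ξf : Vec nx → (Fin (N + 1) → Vec nu) → Fin (N + 1) → Vec nu)
    (ρ : ℝ) (hρ : ρ ∈ Set.Ico (0 : ℝ) 1)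
    -- setting
    (hW : IsCompact W) (hW0 : (0 : Vec nw) ∈ W)
    (hΩ : ∀ k, IsCompact (Ω k)) (hZfc : IsCompact Zf)
    (hZf0 : (0 : Vec nx) ∈ interior Zf)
    (hf0 : f 0 0 0 = 0)
    -- Assumption 1 (continuity)
    (hfc : Continuous fun p : Vec nx × Vec nu × Vec nw => f p.1 p.2.1 p.2.2)
    (hlc : Continuous fun p : Vec nx × Vec nu => l p.1 p.2)
    (hmc : Continuous m)
    (hl0 : l 0 0 = 0) (hm0 : m 0 = 0) (hmnn : ∀ x, 0 ≤ m x)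
    -- Assumption 2 (lower-bounded stage cost)
    (αl : ℝ → ℝ) (hαl : ClassKInf αl)
    (hlb : ∀ k, ∀ p ∈ Ω k, αl ‖p‖ ≤ l p.1 p.2)
    -- continuity of the candidate generating function
    (hξc : Continuous fun p : Vec nx × (Fin (N + 1) → Vec nu) × Vec nw =>
      ξc p.1 p.2.1 p.2.2)
    -- Assumption 3 (i): recursive feasibility of ξ_c
    (hA3i : ∀ p ∈ Fbar f l m Ω Zf ξc ρ, ∀ w ∈ W,
      (f p.1 (p.2 0) w, ξc (f p.1 (p.2 0) w) p.2 w) ∈ Fbar f l m Ω Zf ξc ρ)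
    -- Assumption 3 (ii): candidate nominal improvement
    (hA3ii : ∀ p ∈ Fbar f l m Ω Zf ξc ρ,
      Vcost f l m (f p.1 (p.2 0) 0) (ξc (f p.1 (p.2 0) 0) p.2 0) ≤
        Vcost f l m p.1 p.2 - αl ‖(p.1, p.2 0)‖)
    -- Assumption 3 (iii): recursive feasibility of ξ_f
    (hA3iii : ∀ (xp : Vec nx) (v : Fin (N + 1) → Vec nu), ∀ w ∈ W,
      xp ∈ Zf → (xp, ξc xp v w) ∈ Fbar f l m Ω Zf ξc ρ →
        (xp, ξf xp v) ∈ Fbar f l m Ω Zf ξc ρ)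
    -- Assumption 3 (iv): terminal cost
    (hA3iv : ∀ x ∈ Zf, ∀ u, Vcost f l m x (ξf x u) ≤ m x)
    -- property (v)
    (hA3v : ∀ p ∈ Fbar f l m Ω Zf ξc ρ, p.1 ∈ Zf → Vcost f l m p.1 p.2 ≤ m p.1)
    -- property (vi)
    (hA3vi : ∀ p ∈ Fbar f l m Ω Zf ξc ρ, ∀ v ∈ Useq f l m Ω Zf ξc ρ p.1 p.2,
      (p.1, v) ∈ Fbar f l m Ω Zf ξc ρ)
    (h00 : ((0 : Vec nx), fun _ : Fin (N + 1) => (0 : Vec nu)) ∈ Fbar f l m Ω Zf ξc ρ)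
    :
    (∀ z ∈ Fbar f l m Ω Zf ξc ρ, ∀ w ∈ W,
        Hmap f l m Ω Zf ξc ξf ρ z w ⊆ Fbar f l m Ω Zf ξc ρ) ∧
    ∃ β γ, ClassKL β ∧ ClassK γ ∧
      ∀ z ∈ Fbar f l m Ω Zf ξc ρ, ∀ wseq : ℕ → Vec nw, (∀ i, wseq i ∈ W) →
        ∀ ψ : ℕ → Vec nx × (Fin (N + 1) → Vec nu), ψ 0 = z →
          (∀ k, ψ (k + 1) ∈ Hmap f l m Ω Zf ξc ξf ρ (ψ k) (wseq k)) →
          ∀ k, ‖ψ k‖ ≤ β ‖z‖ k + γ (⨆ i, ‖wseq i‖) :=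
  stability_filter_robust_asymptotic_stability_general f l m Ω Zf W ξc ξf ρ hρ hW hΩ hZf0 hf0 hfc
    hlc hmc hl0 hm0 hmnn αl hαl hlb hξc hA3i hA3iii hA3v hA3vi
end
end

section
/- Fix ρ ∈ [0,1). If f, l, m and ξ_c are continuous and the sets Ω_0,…,Ω_{N−1} and Z_f are compact, then the admissible set F̄_ρ is a compact subset of ℝ^{nx} × ℝ^{nu·N}. -/
open scoped Classical Pointwise
open Filter

noncomputable section

/-- Compactness of the admissible set `F̄_ρ`. -/
theorem Fbar_isCompact
    {nx nu nw N : ℕ}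
    (f : Vec nx → Vec nu → Vec nw → Vec nx)
    (l : Vec nx → Vec nu → ℝ) (m : Vec nx → ℝ)
    (Ω : Fin (N + 1) → Set (Vec nx × Vec nu)) (Zf : Set (Vec nx))
    (ξc : Vec nx → (Fin (N + 1) → Vec nu) → Vec nw → Fin (N + 1) → Vec nu)
    (ρ : ℝ) (hρ : ρ ∈ Set.Ico (0 : ℝ) 1)
    (hfc : Continuous fun p : Vec nx × Vec nu × Vec nw => f p.1 p.2.1 p.2.2)
    (hlc : Continuous fun p : Vec nx × Vec nu => l p.1 p.2)
    (hmc : Continuous m)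
    (hξc : Continuous fun p : Vec nx × (Fin (N + 1) → Vec nu) × Vec nw =>
      ξc p.1 p.2.1 p.2.2)
    (hΩ : ∀ k, IsCompact (Ω k)) (hZfc : IsCompact Zf) :
    IsCompact (Fbar f l m Ω Zf ξc ρ) := by
  classical
  -- continuity of phi
  have hphi : ∀ k : ℕ,
      Continuous fun p : Vec nx × (Fin (N + 1) → Vec nu) => phi f p.1 p.2 k := by
    intro k
    induction k with
    | zero => exact continuous_fst
    | succ k ih =>
        show Continuous fun p : Vec nx × (Fin (N + 1) → Vec nu) =>
          f (phi f p.1 p.2 k) (if h : k < N + 1 then p.2 ⟨k, h⟩ else 0) 0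
        by_cases h : k < N + 1
        · simp only [h, dif_pos]
          exact hfc.comp (ih.prodMk
            (((continuous_apply (⟨k, h⟩ : Fin (N + 1))).comp continuous_snd).prodMk
              (continuous_const : Continuous fun _ : Vec nx × (Fin (N + 1) → Vec nu) =>
                (0 : Vec nw))))
        · simp only [h, dif_neg, not_false_iff]
          exact hfc.comp (ih.prodMk
            ((continuous_const : Continuous fun _ : Vec nx × (Fin (N + 1) → Vec nu) =>
                (0 : Vec nu)).prodMk
              (continuous_const : Continuous fun _ : Vec nx × (Fin (N + 1) → Vec nu) =>
                (0 : Vec nw))))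
  -- continuity of Vcost
  have hV : Continuous fun p : Vec nx × (Fin (N + 1) → Vec nu) =>
      Vcost f l m p.1 p.2 := by
    unfold Vcost
    apply Continuous.add
    · apply continuous_finset_sum
      intro k _
      exact hlc.comp ((hphi (k : ℕ)).prodMk ((continuous_apply k).comp continuous_snd))
    · exact hmc.comp (hphi (N + 1))
  -- feasible set is closed
  have hFeas : IsClosed {p : Vec nx × (Fin (N + 1) → Vec nu) | Feasible f Ω Zf p.1 p.2} := by
    have heq : {p : Vec nx × (Fin (N + 1) → Vec nu) | Feasible f Ω Zf p.1 p.2} =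
        (⋂ k : Fin (N + 1),
            {p : Vec nx × (Fin (N + 1) → Vec nu) | (phi f p.1 p.2 (k : ℕ), p.2 k) ∈ Ω k}) ∩
          {p : Vec nx × (Fin (N + 1) → Vec nu) | phi f p.1 p.2 (N + 1) ∈ Zf} := by
      ext p
      simp [Feasible, Set.mem_iInter]
    rw [heq]
    refine IsClosed.inter (isClosed_iInter fun k => ?_) ?_
    · exact IsClosed.preimage
        ((hphi (k : ℕ)).prodMk ((continuous_apply k).comp continuous_snd))
        (hΩ k).isClosed
    · exact IsClosed.preimage (hphi (N + 1)) hZfc.isClosed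
  -- the auxiliary set S
  set S : Set (Vec nx × (Fin (N + 1) → Vec nu) × (Fin (N + 1) → Vec nu)) :=
    {p | Feasible f Ω Zf p.1 p.2.1 ∧ Feasible f Ω Zf p.1 p.2.2 ∧
      Vcost f l m (f p.1 (p.2.2 0) 0) (ξc (f p.1 (p.2.2 0) 0) p.2.2 0) ≤
        Vcost f l m p.1 p.2.1 - (1 - ρ) * l p.1 (p.2.1 0)} with hS
  have hproj1 : Continuous fun p : Vec nx × (Fin (N + 1) → Vec nu) × (Fin (N + 1) → Vec nu) =>
      (p.1, p.2.1) := continuous_fst.prodMk (continuous_fst.comp continuous_snd)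
  have hproj2 : Continuous fun p : Vec nx × (Fin (N + 1) → Vec nu) × (Fin (N + 1) → Vec nu) =>
      (p.1, p.2.2) := continuous_fst.prodMk (continuous_snd.comp continuous_snd)
  have hFnext : Continuous fun p : Vec nx × (Fin (N + 1) → Vec nu) × (Fin (N + 1) → Vec nu) =>
      f p.1 (p.2.2 0) 0 :=
    hfc.comp (continuous_fst.prodMk
      (((continuous_apply (0 : Fin (N + 1))).comp (continuous_snd.comp continuous_snd)).prodMk
        (continuous_const :
          Continuous fun _ : Vec nx × (Fin (N + 1) → Vec nu) × (Fin (N + 1) → Vec nu) =>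
            (0 : Vec nw))))
  have hg : Continuous fun p : Vec nx × (Fin (N + 1) → Vec nu) × (Fin (N + 1) → Vec nu) =>
      Vcost f l m (f p.1 (p.2.2 0) 0) (ξc (f p.1 (p.2.2 0) 0) p.2.2 0) :=
    hV.comp (hFnext.prodMk (hξc.comp (hFnext.prodMk
      ((continuous_snd.comp continuous_snd).prodMk
        (continuous_const :
          Continuous fun _ : Vec nx × (Fin (N + 1) → Vec nu) × (Fin (N + 1) → Vec nu) =>
            (0 : Vec nw))))))
  have hh : Continuous fun p : Vec nx × (Fin (N + 1) → Vec nu) × (Fin (N + 1) → Vec nu) =>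
      Vcost f l m p.1 p.2.1 - (1 - ρ) * l p.1 (p.2.1 0) :=
    (hV.comp hproj1).sub (continuous_const.mul
      (hlc.comp (continuous_fst.prodMk
        ((continuous_apply (0 : Fin (N + 1))).comp (continuous_fst.comp continuous_snd)))))
  have hSclosed : IsClosed S := by
    have heq : S = {p | Feasible f Ω Zf p.1 p.2.1} ∩
        ({p | Feasible f Ω Zf p.1 p.2.2} ∩
          {p | Vcost f l m (f p.1 (p.2.2 0) 0) (ξc (f p.1 (p.2.2 0) 0) p.2.2 0) ≤
            Vcost f l m p.1 p.2.1 - (1 - ρ) * l p.1 (p.2.1 0)}) := rfl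
    rw [heq]
    exact (hFeas.preimage hproj1).inter
      ((hFeas.preimage hproj2).inter (isClosed_le hg hh))
  have hKcomp : IsCompact ((Prod.fst '' Ω 0) ×ˢ
      ((Set.univ.pi fun k => Prod.snd '' Ω k) ×ˢ (Set.univ.pi fun k => Prod.snd '' Ω k))) :=
    ((hΩ 0).image continuous_fst).prod
      ((isCompact_univ_pi fun k => (hΩ k).image continuous_snd).prod
        (isCompact_univ_pi fun k => (hΩ k).image continuous_snd))
  have hSsub : S ⊆ (Prod.fst '' Ω 0) ×ˢ
      ((Set.univ.pi fun k => Prod.snd '' Ω k) ×ˢ (Set.univ.pi fun k => Prod.snd '' Ω k)) := by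
    rintro ⟨x, u, v⟩ ⟨hu, hv, _⟩
    exact ⟨⟨(x, u 0), hu.1 0, rfl⟩, fun k _ => ⟨(phi f x u (k : ℕ), u k), hu.1 k, rfl⟩,
      fun k _ => ⟨(phi f x v (k : ℕ), v k), hv.1 k, rfl⟩⟩
  have hScomp : IsCompact S := hKcomp.of_isClosed_subset hSclosed hSsub
  have himg : Fbar f l m Ω Zf ξc ρ =
      (fun p : Vec nx × (Fin (N + 1) → Vec nu) × (Fin (N + 1) → Vec nu) => (p.1, p.2.1)) '' S := by
    ext ⟨x, u⟩
    constructor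
    · rintro ⟨hfeas, v, hv1, hv2⟩
      exact ⟨(x, u, v), ⟨hfeas, hv1, hv2⟩, rfl⟩
    · rintro ⟨⟨x', u', v⟩, ⟨h1, h2, h3⟩, heq⟩
      obtain ⟨rfl, rfl⟩ : x' = x ∧ u' = u := by
        simpa [Prod.ext_iff] using heq
      exact ⟨h1, v, h2, h3⟩
  rw [himg]
  exact hScomp.image hproj1
end
end
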